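/- arXiv:1810.00049 — 3 statements merged into one kernel-verified Lean document; each statement's English description precedes it below -/
import Mathlib

section
/- Let $k$ be a field of characteristic $7$ and $S = k[a,b,c,d]$. Set $g = a^2 + b^2 + c^5 b^3 + d^4 b^2$. Then $g^{6} \notin (a^{7}, b^{7}, c^{7}, d^{7})$. -/
open MvPolynomial

lemma fin4_finsupp_ext (f g : Fin 4 →₀ ℕ) :
    f = g ↔ f 0 = g 0 ∧ f 1 = g 1 ∧ f 2 = g 2 ∧ f 3 = g 3 := by
  constructor
  · rintro rfl; exact ⟨rfl, rfl, rfl, rfl⟩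
  · rintro ⟨h0, h1, h2, h3⟩
    ext i
    fin_cases i <;> assumption

lemma coeff_zero_of_mem_span (k : Type*) [Field k] (p : MvPolynomial (Fin 4) k)
    (hp : p ∈ Ideal.span {(X 0 : MvPolynomial (Fin 4) k) ^ 7, (X 1) ^ 7, (X 2) ^ 7, (X 3) ^ 7})
    (m : Fin 4 →₀ ℕ) (hm : ∀ i, m i < 7) : coeff m p = 0 := by
  rw [show ({(X 0 : MvPolynomial (Fin 4) k) ^ 7, (X 1) ^ 7, (X 2) ^ 7, (X 3) ^ 7} : Set _) =
    insert ((X 0)^7) (insert ((X 1)^7) (insert ((X 2)^7) {(X 3)^7})) from rfl] at hp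
  rw [Ideal.mem_span_insert] at hp
  obtain ⟨q0, z0, hz0, rfl⟩ := hp
  rw [Ideal.mem_span_insert] at hz0
  obtain ⟨q1, z1, hz1, rfl⟩ := hz0
  rw [Ideal.mem_span_insert] at hz1
  obtain ⟨q2, z2, hz2, rfl⟩ := hz1
  rw [Ideal.mem_span_singleton] at hz2
  obtain ⟨q3, rfl⟩ := hz2
  have key : ∀ (i : Fin 4) (q : MvPolynomial (Fin 4) k), coeff m (q * (X i)^7) = 0 := by
    intro i q
    rw [X_pow_eq_monomial, coeff_mul_monomial']
    rw [if_neg]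
    intro h
    have := h i
    simp [Finsupp.single_apply] at this
    exact absurd this (by exact Nat.not_le.mpr (hm i))
  simp only [coeff_add, mul_comm]
  rw [key, key, key, key]
  ring

set_option maxHeartbeats 4000000 in
lemma coeff_g_pow_six (k : Type*) [Field k] :
    coeff (Finsupp.single 0 6 + Finsupp.single 1 6 + Finsupp.single 3 4)
      (((X 0 : MvPolynomial (Fin 4) k) ^ 2 + (X 1) ^ 2 + (X 2) ^ 5 * (X 1) ^ 3
        + (X 3) ^ 4 * (X 1) ^ 2) ^ 6) = 60 := by
  ring_nf
  simp only [coeff_add, ← map_ofNat (C : k →+* MvPolynomial (Fin 4) k)]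
  simp [X_pow_eq_monomial, monomial_mul, coeff_monomial, mul_comm, C_mul_monomial,
    fin4_finsupp_ext, Finsupp.add_apply, Finsupp.single_apply]

/-- In `k[a,b,c,d]` with `char k = 7` and `g = a² + b² + c⁵b³ + d⁴b²`,
we have `g⁶ ∉ (a⁷, b⁷, c⁷, d⁷)`. -/
theorem stmt4 (k : Type*) [Field k] [CharP k 7] :
    ((X 0 : MvPolynomial (Fin 4) k) ^ 2 + (X 1) ^ 2 + (X 2) ^ 5 * (X 1) ^ 3
        + (X 3) ^ 4 * (X 1) ^ 2) ^ 6 ∉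
      Ideal.span {(X 0 : MvPolynomial (Fin 4) k) ^ 7, (X 1) ^ 7, (X 2) ^ 7, (X 3) ^ 7} := by
  intro hmem
  have h0 := coeff_zero_of_mem_span k _ hmem
    (Finsupp.single 0 6 + Finsupp.single 1 6 + Finsupp.single 3 4) ?_
  · rw [coeff_g_pow_six] at h0
    have h60 : ((60 : ℕ) : k) = 0 ↔ (7 : ℕ) ∣ 60 := CharP.cast_eq_zero_iff k 7 60
    rw [show ((60 : ℕ) : k) = (60 : k) by norm_num] at h60
    exact (by decide : ¬ (7 : ℕ) ∣ 60) (h60.mp h0)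
  · intro i
    fin_cases i <;> simp [Finsupp.single_apply]
end

section
/- Let $k$ be a field of characteristic $7$ and $S = k[a,b,c,d]$. Set $g = a^2 + b^3 d + c^6 d^4 + d^4$. Then $g^{6} \notin (a^{7}, b^{7}, c^{7}, d^{7})$. -/
open MvPolynomial

private noncomputable abbrev mm : Fin 4 →₀ ℕ :=
  Finsupp.single 0 6 + Finsupp.single 1 6 + Finsupp.single 2 6 + Finsupp.single 3 6

private lemma mm_apply : ∀ i : Fin 4, mm i = 6 := by
  intro i
  fin_cases i <;> simp [Finsupp.single_apply]

private lemma monomial_mul_C {σ R : Type*} [CommSemiring R] (s : σ →₀ ℕ) (a b : R) :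
    monomial s a * C b = monomial s (b * a) := by
  rw [mul_comm, C_mul_monomial]

private lemma X_eq {σ R : Type*} [CommSemiring R] (n : σ) :
    (X n : MvPolynomial σ R) = monomial (Finsupp.single n 1) 1 := rfl

private lemma coeff_gen (k : Type*) [CommSemiring k] (p : MvPolynomial (Fin 4) k)
    (i : Fin 4) : coeff mm (p * X i ^ 7) = 0 := by
  rw [X_pow_eq_monomial, coeff_mul_monomial']
  rw [if_neg]
  rw [Finsupp.single_le_iff, mm_apply]
  omega

private lemma coeff_gen' (k : Type*) [CommSemiring k] (p : MvPolynomial (Fin 4) k)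
    (i : Fin 4) : coeff mm (X i ^ 7 * p) = 0 := by
  rw [mul_comm]; exact coeff_gen k p i

set_option maxHeartbeats 1000000 in
private lemma coeff_g_pow (k : Type*) [CommSemiring k] :
    coeff mm (((X 0 : MvPolynomial (Fin 4) k) ^ 2 + (X 1) ^ 3 * X 3 + (X 2) ^ 6 * (X 3) ^ 4
        + (X 3) ^ 4) ^ 6) = 60 := by
  simp only [X_pow_eq_monomial, X_eq, monomial_pow, monomial_mul, one_pow, one_mul, mul_one]
  rw [add_pow]
  simp only [add_pow, Finset.sum_range_succ, Finset.sum_range_zero, Finset.sum_mul,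
    Finset.mul_sum, zero_add, add_mul, mul_add, monomial_pow, monomial_mul, ← C_eq_coe_nat,
    monomial_mul_C, one_pow, one_mul, mul_one, Finsupp.smul_single, coeff_add, coeff_monomial]
  norm_num [Finsupp.ext_iff, Finsupp.single_apply, Finsupp.add_apply]
  simp +decide
  norm_num [show Nat.choose 5 3 = 10 from rfl]

/-- In `k[a,b,c,d]` with `char k = 7` and `g = a² + b³d + c⁶d⁴ + d⁴`,
we have `g⁶ ∉ (a⁷, b⁷, c⁷, d⁷)`. -/
theorem stmt8 (k : Type*) [Field k] [CharP k 7] :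
    ((X 0 : MvPolynomial (Fin 4) k) ^ 2 + (X 1) ^ 3 * X 3 + (X 2) ^ 6 * (X 3) ^ 4
        + (X 3) ^ 4) ^ 6 ∉
      Ideal.span {(X 0 : MvPolynomial (Fin 4) k) ^ 7, (X 1) ^ 7, (X 2) ^ 7, (X 3) ^ 7} := by
  intro h
  rw [Ideal.mem_span_insert] at h
  obtain ⟨y1, z1, hz1, heq1⟩ := h
  rw [Ideal.mem_span_insert] at hz1
  obtain ⟨y2, z2, hz2, heq2⟩ := hz1
  rw [Ideal.mem_span_insert] at hz2
  obtain ⟨y3, z3, hz3, heq3⟩ := hz2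
  rw [Ideal.mem_span_singleton] at hz3
  obtain ⟨y4, hy4⟩ := hz3
  have hc := congrArg (coeff mm) heq1
  rw [coeff_g_pow, heq2, heq3, hy4] at hc
  simp only [coeff_add, coeff_gen, coeff_gen', add_zero, zero_add] at hc
  have hc' : ((60 : ℕ) : k) = 0 := by exact_mod_cast hc
  have h7 : ¬ ((7:ℕ) ∣ 60) := by decide
  rw [CharP.cast_eq_zero_iff k 7 60] at hc'
  exact h7 hc'
end

section
/- Let $k$ be a field of characteristic different from $2$. The ring $R = k[a,b,c,d]/(a^2 + b^2 + b^3 c^5 + b^2 d^4)$ is not integrally closed in its fraction field: the element $a/b$ of the fraction field is integral over $R$ (it satisfies $(a/b)^2 + 1 + b c^5 + d^4 = 0$) but does not lie in $R$. -/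
/-!
Write `a, b, c, d` for `X 0, X 1, X 2, X 3` and `s = b² + b³c⁵ + b²d⁴`. Over `k[b, c, d]` the
defining polynomial is the monic quadratic `a² + s` in `a`, which is irreducible because `-s` is
not a square: at `b = 1, d = 0` it becomes `-(c⁵ + 1)`, of odd degree. Hence `R` is a domain. In
`R` the relation reads `a² + b²(1 + bc⁵ + d⁴) = 0`, so `a / b` is a root of the monic
`T² + (1 + bc⁵ + d⁴)`. It is not in `R` because `b ∤ a` in `R`: modulo `b, c, d` the relation
becomes `a² = 0`, and `a` is not a multiple of `a²` in `k[a]`.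
-/

open MvPolynomial

namespace Polynomial

variable {A : Type*} [CommRing A] [IsDomain A]

theorem not_isSquare_of_odd_natDegree {p : A[X]} (hp : Odd p.natDegree) : ¬IsSquare p := by
  rintro ⟨r, rfl⟩
  have hr : r ≠ 0 := by rintro rfl; simp at hp
  rw [natDegree_mul hr hr, ← two_mul] at hp
  exact Nat.not_odd_iff_even.mpr (even_two_mul _) hp

theorem irreducible_X_sq_add_C {s : A} (hs : ¬IsSquare (-s)) : Irreducible (X ^ 2 + C s) := by
  have hmonic : (X ^ 2 + C s).Monic := monic_X_pow_add_C s two_ne_zero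
  have hdeg : (X ^ 2 + C s).natDegree = 2 := natDegree_X_pow_add_C
  rw [hmonic.irreducible_iff_roots_eq_zero_of_degree_le_three hdeg.ge (by omega),
    Multiset.eq_zero_iff_forall_notMem]
  intro r hr
  rw [mem_roots hmonic.ne_zero, IsRoot, eval_add, eval_pow, eval_X, eval_C] at hr
  exact hs ⟨r, by linear_combination -hr⟩

end Polynomial

section QuadraticRelation

variable {R K : Type*} [CommRing R] [Field K] [Algebra R K] [IsFractionRing R K] {a b c : R}

theorem notMem_range_of_mul_eq_of_not_dvd (hab : ¬b ∣ a) {x : K}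
    (hx : algebraMap R K b * x = algebraMap R K a) : x ∉ Set.range (algebraMap R K) := by
  rintro ⟨r, rfl⟩
  exact hab ⟨r, IsFractionRing.injective R K (by rw [map_mul, hx])⟩

variable [IsDomain R]

theorem ne_zero_of_sq_add_sq_mul_eq_zero (hrel : a ^ 2 + b ^ 2 * c = 0) (hab : ¬b ∣ a) :
    b ≠ 0 := by
  rintro rfl
  exact hab (by simpa using hrel)

theorem isIntegral_of_mul_eq_of_sq_add_sq_mul_eq_zero (hrel : a ^ 2 + b ^ 2 * c = 0)
    (hab : ¬b ∣ a) {x : K} (hx : algebraMap R K b * x = algebraMap R K a) : IsIntegral R x := by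
  have hb : algebraMap R K b ≠ 0 := (map_ne_zero_iff _ (IsFractionRing.injective R K)).mpr
    (ne_zero_of_sq_add_sq_mul_eq_zero hrel hab)
  have hsq : x ^ 2 + algebraMap R K c = 0 := by
    refine (mul_eq_zero.mp ?_).resolve_left (pow_ne_zero 2 hb)
    have := congrArg (algebraMap R K) hrel
    simp only [map_add, map_mul, map_pow, map_zero, ← hx] at this
    linear_combination this
  refine ⟨Polynomial.X ^ 2 + Polynomial.C c, Polynomial.monic_X_pow_add_C c two_ne_zero, ?_⟩
  simpa using hsq

end QuadraticRelation

noncomputable def chartEquation (k : Type*) [Field k] : MvPolynomial (Fin 4) k :=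
  X 0 ^ 2 + X 1 ^ 2 + X 1 ^ 3 * X 2 ^ 5 + X 1 ^ 2 * X 3 ^ 4

noncomputable def chartConstTerm (k : Type*) [Field k] : MvPolynomial (Fin 3) k :=
  X 0 ^ 2 + X 0 ^ 3 * X 1 ^ 5 + X 0 ^ 2 * X 2 ^ 4

abbrev ChartRing (k : Type*) [Field k] : Type _ :=
  MvPolynomial (Fin 4) k ⧸ Ideal.span {chartEquation k}

namespace ChartRing

variable {k : Type*} [Field k]

theorem finSuccEquiv_chartEquation :
    finSuccEquiv k 3 (chartEquation k) =
      Polynomial.X ^ 2 + Polynomial.C (chartConstTerm k) := by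
  simp only [chartEquation, chartConstTerm, map_add, map_mul, map_pow, finSuccEquiv_X_zero]
  rw [show (1 : Fin 4) = (0 : Fin 3).succ from rfl, show (2 : Fin 4) = (1 : Fin 3).succ from rfl,
    show (3 : Fin 4) = (2 : Fin 3).succ from rfl]
  simp only [finSuccEquiv_X_succ]
  ring

theorem not_isSquare_neg_chartConstTerm : ¬IsSquare (-chartConstTerm k) := by
  let φ : MvPolynomial (Fin 3) k →ₐ[k] Polynomial k := aeval ![1, Polynomial.X, 0]
  have hφ : φ (-chartConstTerm k) = -(Polynomial.X ^ 5 + Polynomial.C 1) := by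
    simp only [φ, chartConstTerm, map_neg, map_add, map_mul, map_pow, aeval_X, Matrix.cons_val,
      map_one]
    ring
  have hodd : Odd (φ (-chartConstTerm k)).natDegree := by
    rw [hφ, Polynomial.natDegree_neg, Polynomial.natDegree_X_pow_add_C]
    decide
  exact fun h => Polynomial.not_isSquare_of_odd_natDegree hodd (h.map φ)

theorem irreducible_chartEquation : Irreducible (chartEquation k) := by
  rw [← MulEquiv.irreducible_iff (finSuccEquiv k 3), finSuccEquiv_chartEquation]
  exact Polynomial.irreducible_X_sq_add_C not_isSquare_neg_chartConstTerm

instance : IsDomain (ChartRing k) :=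
  have : (Ideal.span {chartEquation k}).IsPrime :=
    (Ideal.span_singleton_prime irreducible_chartEquation.ne_zero).mpr
      irreducible_chartEquation.prime
  Ideal.Quotient.isDomain _

theorem mk_sq_add_mk_sq_mul_eq_zero :
    (Ideal.Quotient.mk _ (X 0) : ChartRing k) ^ 2 +
      Ideal.Quotient.mk _ (X 1) ^ 2 * Ideal.Quotient.mk _ (1 + X 1 * X 2 ^ 5 + X 3 ^ 4) = 0 := by
  rw [← map_pow, ← map_pow, ← map_mul, ← map_add, Ideal.Quotient.eq_zero_iff_mem]
  convert Ideal.mem_span_singleton_self (chartEquation k) using 1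
  rw [chartEquation]
  ring

theorem not_mk_X_one_dvd_mk_X_zero :
    ¬(Ideal.Quotient.mk _ (X 1) : ChartRing k) ∣ Ideal.Quotient.mk _ (X 0) := by
  rintro ⟨r, hr⟩
  obtain ⟨g, rfl⟩ := Ideal.Quotient.mk_surjective r
  rw [← map_mul, Ideal.Quotient.eq, Ideal.mem_span_singleton] at hr
  let φ : MvPolynomial (Fin 4) k →ₐ[k] Polynomial k := aeval ![Polynomial.X, 0, 0, 0]
  have := map_dvd φ hr
  simp only [chartEquation, map_add, map_sub, map_mul, map_pow, aeval_X, Matrix.cons_val, ne_eq,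
    OfNat.ofNat_ne_zero, not_false_eq_true, zero_pow, add_zero, mul_zero, zero_mul,
    sub_zero, φ] at this
  simpa using Polynomial.X_pow_dvd_iff.mp this 1 one_lt_two

end ChartRing

theorem stmt10_general (k : Type*) [Field k]
    (I : Ideal (MvPolynomial (Fin 4) k))
    (hI : I = Ideal.span {(X 0 : MvPolynomial (Fin 4) k) ^ 2 + (X 1) ^ 2
      + (X 1) ^ 3 * (X 2) ^ 5 + (X 1) ^ 2 * (X 3) ^ 4}) :
    IsDomain (MvPolynomial (Fin 4) k ⧸ I) ∧
    Ideal.Quotient.mk I (X 1) ≠ 0 ∧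
    ∀ x : FractionRing (MvPolynomial (Fin 4) k ⧸ I),
      algebraMap (MvPolynomial (Fin 4) k ⧸ I) (FractionRing (MvPolynomial (Fin 4) k ⧸ I))
          (Ideal.Quotient.mk I (X 1)) * x =
        algebraMap (MvPolynomial (Fin 4) k ⧸ I) (FractionRing (MvPolynomial (Fin 4) k ⧸ I))
          (Ideal.Quotient.mk I (X 0)) →
      IsIntegral (MvPolynomial (Fin 4) k ⧸ I) x ∧
        x ∉ Set.range (algebraMap (MvPolynomial (Fin 4) k ⧸ I)
          (FractionRing (MvPolynomial (Fin 4) k ⧸ I))) := by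
  obtain rfl : I = Ideal.span {chartEquation k} := hI
  have hrel := ChartRing.mk_sq_add_mk_sq_mul_eq_zero (k := k)
  have hndvd := ChartRing.not_mk_X_one_dvd_mk_X_zero (k := k)
  exact ⟨inferInstance, ne_zero_of_sq_add_sq_mul_eq_zero hrel hndvd,
    fun x hx => ⟨isIntegral_of_mul_eq_of_sq_add_sq_mul_eq_zero hrel hndvd hx,
      notMem_range_of_mul_eq_of_not_dvd hndvd hx⟩⟩

/-- For a field `k` of characteristic `≠ 2`, the ring
`R = k[a,b,c,d]/(a² + b² + b³c⁵ + b²d⁴)` is a domain which is not integrally closed in its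
fraction field: the element `a/b` of the fraction field (i.e. the element `x` with
`b·x = a`, which exists and is unique since `b ≠ 0`) is integral over `R` but does not lie
in (the image of) `R`. -/
theorem stmt10 (k : Type*) [Field k] (h2 : (2 : k) ≠ 0)
    (I : Ideal (MvPolynomial (Fin 4) k))
    (hI : I = Ideal.span {(X 0 : MvPolynomial (Fin 4) k) ^ 2 + (X 1) ^ 2
      + (X 1) ^ 3 * (X 2) ^ 5 + (X 1) ^ 2 * (X 3) ^ 4}) :
    IsDomain (MvPolynomial (Fin 4) k ⧸ I) ∧
    Ideal.Quotient.mk I (X 1) ≠ 0 ∧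
    ∀ x : FractionRing (MvPolynomial (Fin 4) k ⧸ I),
      algebraMap (MvPolynomial (Fin 4) k ⧸ I) (FractionRing (MvPolynomial (Fin 4) k ⧸ I))
          (Ideal.Quotient.mk I (X 1)) * x =
        algebraMap (MvPolynomial (Fin 4) k ⧸ I) (FractionRing (MvPolynomial (Fin 4) k ⧸ I))
          (Ideal.Quotient.mk I (X 0)) →
      IsIntegral (MvPolynomial (Fin 4) k ⧸ I) x ∧
        x ∉ Set.range (algebraMap (MvPolynomial (Fin 4) k ⧸ I)
          (FractionRing (MvPolynomial (Fin 4) k ⧸ I))) :=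
  stmt10_general k I hI
end
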